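/- arXiv:1102.1714 — 2 statements merged into one kernel-verified Lean document; each statement's English description precedes it below -/
import Mathlib

section
/- The Segre variety S = S_{1,1,1}(2) is the disjoint union of the nine generator lines L_{ij} = {E_{ijk} : k ∈ {0,1,2}} for i,j ∈ {0,1,2}; consequently, if P_{ij} is the degree-6 squarefree polynomial cutting out the line L_{ij}, then Q_6 := Σ_{i,j} P_{ij} vanishes exactly on S (among nonzero vectors). -/
/-- Index set for coordinates of `V_2 ⊗ V_2 ⊗ V_2` over `GF(2)`. -/
abbrev ι3 := Fin 2 × Fin 2 × Fin 2

/-- `V_8 = V(2,2) ⊗ V(2,2) ⊗ V(2,2)`, realized in coordinates as `GF(2)^(2×2×2)`. -/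
abbrev V8 := ι3 → ZMod 2

/-- The Segre variety `S_{1,1,1}(2)`: the nonzero decomposable tensors `u ⊗ v ⊗ w`. -/
def Segre : Set V8 :=
  {x | x ≠ 0 ∧ ∃ u v w : Fin 2 → ZMod 2, x = fun p => u p.1 * v p.2.1 * w p.2.2}

/-- The three points `u₀, u₁, u₂ = u₀ + u₁` of the projective line `PG(1,2)`. -/
def pt : Fin 3 → Fin 2 → ZMod 2 := ![![1, 0], ![0, 1], ![1, 1]]

/-- The 27 points `E_{ijk} = u_i ⊗ u_j ⊗ u_k` of the Segre variety. -/
def E (i j k : Fin 3) : V8 := fun p => pt i p.1 * pt j p.2.1 * pt k p.2.2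

/-- The nine generator lines `L_{ij} = {E_{ijk} : k}`. -/
def L (i j : Fin 3) : Set V8 := {x | ∃ k : Fin 3, x = E i j k}

/-- Evaluation of a squarefree (multilinear) polynomial given by its coefficients. -/
def mEval (c : Finset ι3 → ZMod 2) (x : V8) : ZMod 2 :=
  ∑ s : Finset ι3, c s * ∏ i ∈ s, x i

/-- Degree of a squarefree polynomial given by its coefficients. -/
def mDeg (c : Finset ι3 → ZMod 2) : ℕ :=
  (Finset.univ.filter fun s : Finset ι3 => c s ≠ 0).sup Finset.card

/-- The Segre variety is the disjoint union of the nine generator lines `L_{ij}`;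
consequently, if `P_{ij}` is the degree-6 squarefree polynomial cutting out `L_{ij}`,
then `Q₆ = Σ_{ij} P_{ij}` vanishes exactly on `S` among nonzero vectors. -/
theorem stmt17 (c : Fin 3 → Fin 3 → (Finset ι3 → ZMod 2))
    (hc0 : ∀ i j, c i j ∅ = 0)
    (hcut : ∀ i j, ∀ x, mEval (c i j) x = 0 ↔ x = 0 ∨ x ∈ L i j)
    (hdeg : ∀ i j, mDeg (c i j) = 6) :
    Segre = (⋃ i, ⋃ j, L i j) ∧
    (∀ i j i' j', (i, j) ≠ (i', j') → Disjoint (L i j) (L i' j')) ∧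
    (∀ x : V8, x ≠ 0 → ((∑ i, ∑ j, mEval (c i j) x) = 0 ↔ x ∈ Segre)) := by

  have hE : ∀ i j k i' j' k' : Fin 3, (i,j) ≠ (i',j') → E i j k ≠ E i' j' k' := by decide
  have hone : ∀ a : ZMod 2, a ≠ 0 → a = 1 := by decide
  have hS : ∀ x : V8, x ∈ Segre ↔ ∃ i j, x ∈ L i j := by
    intro x
    have key1 : ∀ u v w : Fin 2 → ZMod 2, (fun p : ι3 => u p.1 * v p.2.1 * w p.2.2) ≠ 0 →
        ∃ i j k : Fin 3, (fun p : ι3 => u p.1 * v p.2.1 * w p.2.2) = E i j k := by decide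
    have key2 : ∀ i j k : Fin 3, E i j k ≠ 0 ∧ ∃ u v w : Fin 2 → ZMod 2,
        E i j k = fun p : ι3 => u p.1 * v p.2.1 * w p.2.2 := by decide
    constructor
    · rintro ⟨hx, u, v, w, rfl⟩
      obtain ⟨i, j, k, hk⟩ := key1 u v w hx
      exact ⟨i, j, k, hk⟩
    · rintro ⟨i, j, k, rfl⟩
      exact key2 i j k
  have hdisj : ∀ i j i' j' : Fin 3, (i,j) ≠ (i',j') → Disjoint (L i j) (L i' j') := by
    intro i j i' j' h
    rw [Set.disjoint_left]
    rintro x ⟨k, rfl⟩ ⟨k', hk'⟩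
    exact hE i j k i' j' k' h hk'
  refine ⟨Set.ext fun x => by simpa [Set.mem_iUnion] using hS x, hdisj, ?_⟩
  intro x hx
  have hval : ∀ i j, x ∉ L i j → mEval (c i j) x = 1 := by
    intro i j h
    refine hone _ fun h0 => ?_
    rcases (hcut i j x).1 h0 with h' | h'
    · exact hx h'
    · exact h h'
  by_cases hxS : x ∈ Segre
  · simp only [hxS, iff_true]
    obtain ⟨i₀, j₀, hmem⟩ := (hS x).1 hxS
    have hsum : (∑ i, ∑ j, mEval (c i j) x)
        = ∑ i : Fin 3, ∑ j : Fin 3, (if (i, j) = (i₀, j₀) then 0 else 1 : ZMod 2) := by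
      refine Finset.sum_congr rfl fun i _ => Finset.sum_congr rfl fun j _ => ?_
      by_cases h : (i, j) = (i₀, j₀)
      · rw [Prod.mk.injEq] at h
        obtain ⟨rfl, rfl⟩ := h
        simpa using (hcut i j x).2 (Or.inr hmem)
      · rw [if_neg h]
        refine hval i j fun hmem' => ?_
        exact (Set.disjoint_left.1 (hdisj i j i₀ j₀ h)) hmem' hmem
    rw [hsum]
    fin_cases i₀ <;> fin_cases j₀ <;> decide
  · simp only [hxS, iff_false]
    have hsum : (∑ i, ∑ j, mEval (c i j) x) = ∑ _i : Fin 3, ∑ _j : Fin 3, (1 : ZMod 2) := by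
      refine Finset.sum_congr rfl fun i _ => Finset.sum_congr rfl fun j _ => ?_
      exact hval i j fun hmem => hxS ((hS x).2 ⟨i, j, hmem⟩)
    rw [hsum]
    decide
end

section
/- The 5-flat X = ⟨e_1, e_3, e_5, e_7, e_2+e_4+e_6⟩ of PG(7,2) meets the Segre variety S_{1,1,1}(2) in exactly the 4 points e_1, e_3, e_5, e_7; in particular X meets S in an even number of points, so the polynomial degree of S is at least 6. -/
set_option maxRecDepth 10000

-- auxiliary
instance segreDec : DecidablePred (· ∈ Segre) := fun x =>
  decidable_of_iff (x ≠ 0 ∧ ∃ u v w : Fin 2 → ZMod 2,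
    x = fun p => u p.1 * v p.2.1 * w p.2.2) Iff.rfl

def pcode : ι3 → ℕ := fun p => p.1.val + 2 * p.2.1.val + 4 * p.2.2.val

def phi (t : Fin 6 → ZMod 2) : V8 := fun p =>
  if h : 1 ≤ pcode p ∧ pcode p ≤ 6 then t ⟨pcode p - 1, by omega⟩ else 0

def Kc : Submodule (ZMod 2) V8 where
  carrier := {x | x (1,1,1) = 0 ∧ x (1,0,0) = x (0,1,0) ∧ x (0,1,0) = x (0,0,1)}
  add_mem' := by
    rintro a b ⟨h1, h2, h3⟩ ⟨g1, g2, g3⟩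
    exact ⟨by rw [Pi.add_apply, h1, g1, add_zero],
           by rw [Pi.add_apply, Pi.add_apply, h2, g2],
           by rw [Pi.add_apply, Pi.add_apply, h3, g3]⟩
  zero_mem' := ⟨rfl, rfl, rfl⟩
  smul_mem' := by
    rintro r x ⟨h1, h2, h3⟩
    exact ⟨by rw [Pi.smul_apply, h1, smul_zero],
           by rw [Pi.smul_apply, Pi.smul_apply, h2],
           by rw [Pi.smul_apply, Pi.smul_apply, h3]⟩

lemma key1 : ∀ u v w : Fin 2 → ZMod 2,
    (fun p : ι3 => u p.1 * v p.2.1 * w p.2.2) ≠ 0 →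
    ((fun p : ι3 => u p.1 * v p.2.1 * w p.2.2) (1,1,1) = 0 ∧
     (fun p : ι3 => u p.1 * v p.2.1 * w p.2.2) (1,0,0) = (fun p : ι3 => u p.1 * v p.2.1 * w p.2.2) (0,1,0) ∧
     (fun p : ι3 => u p.1 * v p.2.1 * w p.2.2) (0,1,0) = (fun p : ι3 => u p.1 * v p.2.1 * w p.2.2) (0,0,1)) →
    ((fun p : ι3 => u p.1 * v p.2.1 * w p.2.2) = E 0 0 0 ∨
     (fun p : ι3 => u p.1 * v p.2.1 * w p.2.2) = E 1 1 0 ∨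
     (fun p : ι3 => u p.1 * v p.2.1 * w p.2.2) = E 1 0 1 ∨
     (fun p : ι3 => u p.1 * v p.2.1 * w p.2.2) = E 0 1 1) := by decide

lemma KF1 : ∀ s : Finset ι3, s.card ≤ 5 →
    ∑ t : Fin 6 → ZMod 2, ∏ i ∈ s, phi t i = 0 := by decide

lemma KF2 : (∑ t : Fin 6 → ZMod 2,
    (if phi t = 0 ∨ phi t ∈ Segre then (0 : ZMod 2) else 1)) = 1 := by decide

/-- The flat `X = ⟨e₁, e₃, e₅, e₇, e₂+e₄+e₆⟩` meets the Segre variety in exactly the 4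
points `e₁ = E₀₀₀, e₃ = E₁₁₀, e₅ = E₁₀₁, e₇ = E₀₁₁` (an even number of points); in
consequence the polynomial degree of the Segre variety is at least 6. -/
theorem stmt18 :
    ((Submodule.span (ZMod 2)
        {E 0 0 0, E 1 1 0, E 1 0 1, E 0 1 1, E 1 0 0 + E 0 1 0 + E 0 0 1} : Set V8)
      ∩ Segre) = {E 0 0 0, E 1 1 0, E 1 0 1, E 0 1 1} ∧
    ∀ c : Finset ι3 → ZMod 2, c ∅ = 0 →
      (∀ x, mEval c x = 0 ↔ x = 0 ∨ x ∈ Segre) → 6 ≤ mDeg c := by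
  constructor
  · ext x
    constructor
    · rintro ⟨hspan, hseg⟩
      have hgen : ({E 0 0 0, E 1 1 0, E 1 0 1, E 0 1 1, E 1 0 0 + E 0 1 0 + E 0 0 1} : Set V8)
          ⊆ (Kc : Set V8) := by
        intro y hy
        simp only [Set.mem_insert_iff, Set.mem_singleton_iff] at hy
        rcases hy with rfl | rfl | rfl | rfl | rfl <;>
          exact ⟨by decide, by decide, by decide⟩
      have hK : x ∈ Kc := (Submodule.span_le.mpr hgen) hspan
      obtain ⟨hx0, u, v, w, rfl⟩ := hseg
      have := key1 u v w hx0 hK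
      simpa [Set.mem_insert_iff, Set.mem_singleton_iff] using this
    · intro hx
      simp only [Set.mem_insert_iff, Set.mem_singleton_iff] at hx
      have hsub := Submodule.subset_span (R := ZMod 2)
        (s := ({E 0 0 0, E 1 1 0, E 1 0 1, E 0 1 1, E 1 0 0 + E 0 1 0 + E 0 0 1} : Set V8))
      rcases hx with rfl | rfl | rfl | rfl
      · exact ⟨hsub (by simp), by decide, pt 0, pt 0, pt 0, rfl⟩
      · exact ⟨hsub (by simp), by decide, pt 1, pt 1, pt 0, rfl⟩
      · exact ⟨hsub (by simp), by decide, pt 1, pt 0, pt 1, rfl⟩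
      · exact ⟨hsub (by simp), by decide, pt 0, pt 1, pt 1, rfl⟩
  · intro c hc0 hQ
    by_contra h
    push_neg at h
    have hcard : ∀ s : Finset ι3, c s ≠ 0 → s.card ≤ 5 := by
      intro s hs
      have : s.card ≤ mDeg c := Finset.le_sup (by simp [hs])
      omega
    have hsum0 : ∑ t : Fin 6 → ZMod 2, mEval c (phi t) = 0 := by
      unfold mEval
      rw [Finset.sum_comm]
      apply Finset.sum_eq_zero
      intro s _
      rw [← Finset.mul_sum]
      rcases eq_or_ne (c s) 0 with h0 | h0
      · rw [h0, zero_mul]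
      · rw [KF1 s (hcard s h0), mul_zero]
    have hsum1 : ∑ t : Fin 6 → ZMod 2, mEval c (phi t) = 1 := by
      have hone : ∀ a : ZMod 2, a ≠ 0 → a = 1 := by decide
      calc ∑ t : Fin 6 → ZMod 2, mEval c (phi t)
          = ∑ t : Fin 6 → ZMod 2, (if phi t = 0 ∨ phi t ∈ Segre then (0 : ZMod 2) else 1) := by
            apply Finset.sum_congr rfl
            intro t _
            by_cases ht : phi t = 0 ∨ phi t ∈ Segre
            · rw [if_pos ht]; exact (hQ (phi t)).mpr ht
            · rw [if_neg ht]
              exact hone _ (fun hz => ht ((hQ (phi t)).mp hz))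
        _ = 1 := KF2
    rw [hsum0] at hsum1
    exact absurd hsum1 (by decide)
end
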